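/- Let A be a unital algebra over ℂ, q a nonzero complex number, n ≥ 0, and x₀, x₁, …, xₙ ∈ A, with an involution * on A. Define matrices u_{(2k)} ∈ Mat_{2^k}(A) recursively by u_{(0)} := x₀ and u_{(2k)} := [[q^{−1} u_{(2k−2)}, x_k·I], [x_k*·I, −u_{(2k−2)}]]. Then the matrix trace of u_{(2n)} equals (q^{−1} − 1)^n x₀. Consequently, for the idempotent e_{(2n)} := (1/2)(I + u_{(2n)}), one has tr(e_{(2n)} − (1/2)I_{2^n}) = (1/2)(q^{−1} − 1)^n x₀. -/
import Mathlib

open Matrix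

/-- The canonical matrices `u_{(2k)}` over a unital ℂ-algebra with involution,
defined recursively by `u_{(0)} = x₀` and
`u_{(2k)} = [[q⁻¹ u_{(2k−2)}, x_k·I], [x_k*·I, −u_{(2k−2)}]]`. -/
noncomputable def uMat {A : Type*} [Ring A] [Algebra ℂ A] [StarRing A]
    (q : ℂ) (x : ℕ → A) : (k : ℕ) → Matrix (Fin (2 ^ k)) (Fin (2 ^ k)) A
  | 0 => Matrix.of fun _ _ => x 0
  | (k + 1) =>
    Matrix.reindex (finSumFinEquiv.trans (finCongr (by rw [pow_succ, mul_two])))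
      (finSumFinEquiv.trans (finCongr (by rw [pow_succ, mul_two])))
      (Matrix.fromBlocks (q⁻¹ • uMat q x k) (x (k + 1) • 1)
        (star (x (k + 1)) • 1) (-(uMat q x k)))

lemma trace_reindex' {A : Type*} [AddCommMonoid A] {m n : Type*} [Fintype m] [Fintype n]
    [DecidableEq m] [DecidableEq n] (e : m ≃ n) (M : Matrix m m A) :
    (Matrix.reindex e e M).trace = M.trace := by
  simp only [Matrix.trace, Matrix.diag, Matrix.reindex_apply, Matrix.submatrix_apply]
  exact Equiv.sum_comp e.symm (fun i => M i i)

lemma trace_fromBlocks' {A : Type*} [AddCommMonoid A] {m n : Type*} [Fintype m] [Fintype n]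
    (M : Matrix m m A) (B : Matrix m n A) (C : Matrix n m A) (D : Matrix n n A) :
    (Matrix.fromBlocks M B C D).trace = M.trace + D.trace := by
  simp only [Matrix.trace, Matrix.diag, Fintype.sum_sum_type, Matrix.fromBlocks_apply₁₁,
    Matrix.fromBlocks_apply₂₂]

lemma uMat_trace_aux {A : Type*} [Ring A] [Algebra ℂ A] [StarRing A]
    (q : ℂ) (x : ℕ → A) (n : ℕ) :
    Matrix.trace (uMat q x n) = (q⁻¹ - 1) ^ n • x 0 := by
  induction n with
  | zero => simp [uMat, Matrix.trace]
  | succ k ih =>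
    rw [uMat, trace_reindex', trace_fromBlocks', Matrix.trace_smul,
      Matrix.trace_neg, ih, smul_smul, ← sub_eq_add_neg, ← sub_smul]
    congr 1
    ring

/-- The trace of `u_{(2n)}` equals `(q⁻¹ − 1)ⁿ x₀`; hence for the idempotent
`e_{(2n)} = ½(1 + u_{(2n)})` one has
`tr(e_{(2n)} − ½·1) = ½ (q⁻¹ − 1)ⁿ x₀` (the Chern character `ch₀(e_{(2n)})`). -/
theorem uMat_trace
    (A : Type*) [Ring A] [Algebra ℂ A] [StarRing A]
    (q : ℂ) (hq : q ≠ 0) (n : ℕ) (x : ℕ → A) :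
    Matrix.trace (uMat q x n) = (q⁻¹ - 1) ^ n • x 0 ∧
    Matrix.trace ((2 : ℂ)⁻¹ • (1 + uMat q x n)
        - (2 : ℂ)⁻¹ • (1 : Matrix (Fin (2 ^ n)) (Fin (2 ^ n)) A))
      = ((2 : ℂ)⁻¹ * (q⁻¹ - 1) ^ n) • x 0 := by
  refine ⟨uMat_trace_aux q x n, ?_⟩
  rw [smul_add, add_sub_cancel_left, Matrix.trace_smul, uMat_trace_aux, smul_smul]
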